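/- Observational equivalence is a congruence with respect to the dot: if M ≈_P M' and N ≈_P N', then M.N ≈_P M'.N'. -/

import Mathlib

/-- Terms of continuation calculus: names (coded as naturals) and dot. -/
inductive Tm where
  | name : ℕ → Tm
  | dot : Tm → Tm → Tm
deriving DecidableEq

/-- Right-hand sides of rules: names, variables (de Bruijn-style indices
into the left-hand side's variable list), and dot. -/
inductive Rhs where
  | name : ℕ → Rhs
  | var : ℕ → Rhs
  | dot : Rhs → Rhs → Rhs
deriving DecidableEq

/-- A rule `n.x₁.⋯.xₖ → r`: head name, arity `k`, and right-hand side. -/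
structure Rule where
  head : ℕ
  arity : ℕ
  rhs : Rhs
deriving DecidableEq

/-- A program is a finite set of rules. -/
abbrev Program := Finset Rule

/-- Variables occurring in a right-hand side. -/
def Rhs.HasVar : Rhs → ℕ → Prop
  | .name _, _ => False
  | .var w, v => w = v
  | .dot a b, v => a.HasVar v ∨ b.HasVar v

/-- Well-formedness: every variable of a right-hand side occurs in the
left-hand side, and there is at most one rule per head name. -/
def Program.Wf (P : Program) : Prop :=
  (∀ r ∈ P, ∀ v, r.rhs.HasVar v → v < r.arity) ∧
  (∀ r₁ ∈ P, ∀ r₂ ∈ P, r₁.head = r₂.head → r₁ = r₂)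

/-- `n.t₁.⋯.tₖ` : left-associated application of a term to a list of terms. -/
def Tm.apps : Tm → List Tm → Tm
  | h, [] => h
  | h, t :: ts => Tm.apps (h.dot t) ts

/-- Instantiation of a right-hand side with the terms matched by the
left-hand side variables; fails if some variable is out of range. -/
def Rhs.inst (ts : List Tm) : Rhs → Option Tm
  | .name n => some (.name n)
  | .var v => ts[v]?
  | .dot a b => do pure (.dot (← a.inst ts) (← b.inst ts))

/-- One-step evaluation `M →_P N`. -/
def Step (P : Program) (M N : Tm) : Prop :=
  ∃ r ∈ P, ∃ ts : List Tm, ts.length = r.arity ∧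
    M = Tm.apps (.name r.head) ts ∧ r.rhs.inst ts = some N

/-- Multi-step evaluation `M →*_P N`. -/
def Steps (P : Program) : Tm → Tm → Prop := Relation.ReflTransGen (Step P)

/-- `M` is final: it has no successor. -/
def Final (P : Program) (M : Tm) : Prop := ¬ ∃ N, Step P M N

/-- `M` terminates: it evaluates to a final term. -/
def Terminates (P : Program) (M : Tm) : Prop := ∃ N, Steps P M N ∧ Final P N

/-- The name `m` occurs in a term. -/
def Tm.HasName (m : ℕ) : Tm → Prop
  | .name n => n = m
  | .dot a b => a.HasName m ∨ b.HasName m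

/-- The name `m` occurs in a right-hand side. -/
def Rhs.HasName (m : ℕ) : Rhs → Prop
  | .name n => n = m
  | .var _ => False
  | .dot a b => a.HasName m ∨ b.HasName m

/-- The name `m` occurs (is mentioned) in a program. -/
def Program.HasName (P : Program) (m : ℕ) : Prop :=
  ∃ r ∈ P, r.head = m ∨ r.rhs.HasName m

/-- The name `m` is defined by the program (is the head of some rule). -/
def Program.Defines (P : Program) (m : ℕ) : Prop :=
  ∃ r ∈ P, r.head = m

/-- Substitution of a term for a name, `M[fr := t]`. -/
def Tm.subName (m : ℕ) (t : Tm) : Tm → Tm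
  | .name n => if n = m then t else .name n
  | .dot a b => .dot (Tm.subName m t a) (Tm.subName m t b)

/-- Common reduct relation `M =_P N`. -/
def CommonRed (P : Program) (M N : Tm) : Prop :=
  ∃ t, Steps P M t ∧ Steps P N t

/-- Observational equivalence `M ≈_P N`. -/
def ObsEq (P : Program) (M N : Tm) : Prop :=
  ∀ P' : Program, P'.Wf → P ⊆ P' →
    ∀ X : Tm, (Terminates P' (X.dot M) ↔ Terminates P' (X.dot N))

/-- Renaming of names in a term. -/
def Tm.rename (f : ℕ → ℕ) : Tm → Tm
  | .name n => .name (f n)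
  | .dot a b => .dot (a.rename f) (b.rename f)

/-- Renaming of names in a right-hand side. -/
def Rhs.rename (f : ℕ → ℕ) : Rhs → Rhs
  | .name n => .name (f n)
  | .var v => .var v
  | .dot a b => .dot (a.rename f) (b.rename f)

/-- Renaming of names in a rule. -/
def Rule.rename (f : ℕ → ℕ) (r : Rule) : Rule :=
  ⟨f r.head, r.arity, r.rhs.rename f⟩

/-- Renaming of names in a program. -/
def Program.rename (f : ℕ → ℕ) (P : Program) : Program :=
  P.image (Rule.rename f)

/-- The fresh substitution `[n⃗ := m⃗]` as a function on names. -/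
def renFun (ns ms : List ℕ) (n : ℕ) : ℕ :=
  ((ns.zip ms).lookup n).getD n

/-- `M` has arity `k` under `P`: `M = n.q₁.⋯.qᵢ` where `n` has a rule of
arity `i + k`. -/
def Tm.ArityIs (P : Program) (M : Tm) (k : ℕ) : Prop :=
  ∃ r ∈ P, ∃ ts : List Tm, M = Tm.apps (.name r.head) ts ∧ ts.length + k = r.arity


/-!
Given a well-formed extension `P'` and a context `X`, add two rules with fresh heads,
`B.n.m → X.(m.n)` and `A.m.n → X.(m.n)`. Then `X.(M.N)` is one step away from `B.N.M`, which
is `M` in the context `B.N`, so `M ≈ M'` transfers termination to `X.(M'.N)`; in the same way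
`N ≈ N'`, used in the context `A.M'`, transfers it on to `X.(M'.N')`. Evaluation is
deterministic, so termination is invariant under a step; and the reducts of a term over the
old names stay over the old names, so the fresh rules never fire on them.
-/

namespace Tm

def names (t : Tm) : Set ℕ := {n | t.HasName n}

@[simp] lemma names_name (n : ℕ) : (name n).names = {n} := by
  ext m; simp [names, HasName, eq_comm]

@[simp] lemma names_dot (a b : Tm) : (a.dot b).names = a.names ∪ b.names := rfl

lemma finite_names : ∀ t : Tm, t.names.Finite
  | .name n => by simp
  | .dot a b => by simpa using a.finite_names.union b.finite_names

lemma names_apps (h : Tm) (ts : List Tm) :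
    (h.apps ts).names = h.names ∪ ⋃ t ∈ ts, t.names := by
  induction ts generalizing h with
  | nil => simp [apps]
  | cons t ts ih => simp [apps, ih, Set.union_assoc]

def headName : Tm → ℕ
  | .name n => n
  | .dot a _ => a.headName

def args : Tm → List Tm
  | .name _ => []
  | .dot a b => a.args ++ [b]

lemma headName_apps (h : Tm) (ts : List Tm) : (h.apps ts).headName = h.headName := by
  induction ts generalizing h with
  | nil => rfl
  | cons t ts ih => exact ih _

lemma args_apps (h : Tm) (ts : List Tm) : (h.apps ts).args = h.args ++ ts := by
  induction ts generalizing h with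
  | nil => simp [apps]
  | cons t ts ih => simp [apps, ih, args]

lemma apps_name_inj {a b : ℕ} {ts us : List Tm} :
    (name a).apps ts = (name b).apps us ↔ a = b ∧ ts = us := by
  refine ⟨fun h => ⟨?_, ?_⟩, fun ⟨ha, hts⟩ => ha ▸ hts ▸ rfl⟩
  · simpa [headName_apps, headName] using congrArg headName h
  · simpa [args_apps, args] using congrArg args h

def toRhs : Tm → Rhs
  | .name n => .name n
  | .dot a b => .dot a.toRhs b.toRhs

lemma inst_toRhs (ts : List Tm) : ∀ t : Tm, t.toRhs.inst ts = some t
  | .name _ => rfl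
  | .dot a b => by simp [toRhs, Rhs.inst, inst_toRhs ts a, inst_toRhs ts b]

lemma not_hasVar_toRhs (v : ℕ) : ∀ t : Tm, ¬ t.toRhs.HasVar v
  | .name _, h => h
  | .dot a b, h => h.elim (not_hasVar_toRhs v a) (not_hasVar_toRhs v b)

end Tm

namespace Rhs

def names (r : Rhs) : Set ℕ := {n | r.HasName n}

lemma finite_names : ∀ r : Rhs, r.names.Finite
  | .name n => (Set.finite_singleton n).subset fun m (h : n = m) => h.symm
  | .var _ => Set.finite_empty.subset fun _ h => h.elim
  | .dot a b => (a.finite_names.union b.finite_names).subset fun _ h => h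

lemma names_inst_subset {ts : List Tm} :
    ∀ {r : Rhs} {u : Tm}, r.inst ts = some u → u.names ⊆ r.names ∪ ⋃ t ∈ ts, t.names
  | .name n, u, h => by
      obtain rfl := Option.some.inj h
      intro m (hm : n = m)
      exact Or.inl hm
  | .var v, u, h => fun m hm =>
      Or.inr (Set.mem_biUnion (List.mem_of_getElem? h) hm)
  | .dot a b, u, h => by
      simp only [inst, Option.bind_eq_bind, Option.bind_eq_some_iff, Option.pure_def,
        Option.some.injEq] at h
      obtain ⟨x, hx, y, hy, rfl⟩ := h
      intro m hm
      rcases hm with hm | hm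
      · exact (names_inst_subset hx hm).imp Or.inl id
      · exact (names_inst_subset hy hm).imp Or.inr id

end Rhs

namespace Program

def names (P : Program) : Set ℕ := {n | P.HasName n}

lemma names_eq (P : Program) : P.names = ⋃ r ∈ P, insert r.head r.rhs.names := by
  ext n; simp [names, HasName, Rhs.names, eq_comm]

lemma finite_names (P : Program) : P.names.Finite := by
  rw [names_eq]
  exact P.finite_toSet.biUnion fun r _ => r.rhs.finite_names.insert r.head

variable {P : Program} {r : Rule}

lemma head_mem_names (hr : r ∈ P) : r.head ∈ P.names :=
  ⟨r, hr, Or.inl rfl⟩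

lemma Defines.mem_names {n : ℕ} (h : P.Defines n) : n ∈ P.names := by
  obtain ⟨r, hr, rfl⟩ := h
  exact head_mem_names hr

lemma rhs_names_subset (hr : r ∈ P) : r.rhs.names ⊆ P.names :=
  fun _ hn => ⟨r, hr, Or.inr hn⟩

lemma Wf.insert (hP : P.Wf) (hr : ∀ v, r.rhs.HasVar v → v < r.arity)
    (hfresh : ¬ P.Defines r.head) : (insert r P).Wf := by
  refine ⟨fun r' hr' => ?_, fun r₁ hr₁ r₂ hr₂ hh => ?_⟩
  · rcases Finset.mem_insert.1 hr' with rfl | hr'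
    exacts [hr, hP.1 r' hr']
  · simp only [Finset.mem_insert] at hr₁ hr₂
    rcases hr₁ with rfl | hr₁ <;> rcases hr₂ with rfl | hr₂
    · rfl
    · exact absurd ⟨r₂, hr₂, hh.symm⟩ hfresh
    · exact absurd ⟨r₁, hr₁, hh⟩ hfresh
    · exact hP.2 r₁ hr₁ r₂ hr₂ hh

end Program

section Evaluation

variable {P Q : Program} {S : Set ℕ} {M M' N : Tm}

lemma Step.mono (hPQ : P ⊆ Q) (h : Step P M N) : Step Q M N := by
  obtain ⟨r, hr, ts, hlen, hM, hN⟩ := h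
  exact ⟨r, hPQ hr, ts, hlen, hM, hN⟩

lemma Step.deterministic (hP : P.Wf) {N₁ N₂ : Tm} (h₁ : Step P M N₁) (h₂ : Step P M N₂) :
    N₁ = N₂ := by
  obtain ⟨r₁, hr₁, ts₁, -, rfl, hN₁⟩ := h₁
  obtain ⟨r₂, hr₂, ts₂, -, hM, hN₂⟩ := h₂
  obtain ⟨hhead, rfl⟩ := Tm.apps_name_inj.1 hM
  obtain rfl := hP.2 r₁ hr₁ r₂ hr₂ hhead
  exact Option.some.inj (hN₁.symm.trans hN₂)

lemma Step.names_subset (h : Step P M N) : N.names ⊆ M.names ∪ P.names := by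
  obtain ⟨r, hr, ts, -, rfl, hN⟩ := h
  refine (Rhs.names_inst_subset hN).trans (Set.union_subset ?_ ?_)
  · exact (Program.rhs_names_subset hr).trans Set.subset_union_right
  · rw [Tm.names_apps]
    exact Set.subset_union_right.trans Set.subset_union_left

lemma Step.of_extension (hext : ∀ r ∈ Q, r.head ∈ S → r ∈ P) (hM : M.names ⊆ S)
    (h : Step Q M N) : Step P M N := by
  obtain ⟨r, hr, ts, hlen, rfl, hN⟩ := h
  refine ⟨r, hext r hr (hM ?_), ts, hlen, rfl, hN⟩
  simp [Tm.names_apps]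

lemma Steps.of_extension (hP : P.names ⊆ S) (hext : ∀ r ∈ Q, r.head ∈ S → r ∈ P)
    (hM : M.names ⊆ S) (h : Steps Q M N) : Steps P M N ∧ N.names ⊆ S := by
  induction h using Relation.ReflTransGen.head_induction_on with
  | refl => exact ⟨.refl, hM⟩
  | head hstep _ ih =>
      have hstep' := hstep.of_extension hext hM
      obtain ⟨hsteps, hN⟩ := ih (hstep'.names_subset.trans (Set.union_subset hM hP))
      exact ⟨.head hstep' hsteps, hN⟩

lemma terminates_iff_of_extension (hPQ : P ⊆ Q) (hP : P.names ⊆ S)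
    (hext : ∀ r ∈ Q, r.head ∈ S → r ∈ P) (hM : M.names ⊆ S) :
    Terminates Q M ↔ Terminates P M := by
  constructor
  · rintro ⟨T, hsteps, hfinal⟩
    obtain ⟨hsteps', hT⟩ := hsteps.of_extension hP hext hM
    exact ⟨T, hsteps', fun ⟨U, hU⟩ => hfinal ⟨U, hU.mono hPQ⟩⟩
  · rintro ⟨T, hsteps, hfinal⟩
    have hsteps' : Steps Q M T :=
      Relation.ReflTransGen.mono (fun _ _ => Step.mono hPQ) _ _ hsteps
    have hT := (hsteps'.of_extension hP hext hM).2
    exact ⟨T, hsteps', fun ⟨U, hU⟩ => hfinal ⟨U, hU.of_extension hext hT⟩⟩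

lemma Step.terminates_iff (hP : P.Wf) (h : Step P M N) :
    Terminates P M ↔ Terminates P N := by
  constructor
  · rintro ⟨T, hsteps, hfinal⟩
    rcases hsteps.cases_head with rfl | ⟨U, hMU, hUT⟩
    · exact absurd ⟨N, h⟩ hfinal
    · exact ⟨T, h.deterministic hP hMU ▸ hUT, hfinal⟩
  · rintro ⟨T, hsteps, hfinal⟩
    exact ⟨T, .head h hsteps, hfinal⟩

lemma ObsEq.terminates_iff_of_step (hMM' : ObsEq P M M') (hQ : Q.Wf) (hPQ : P ⊆ Q)
    {C U U' : Tm} (h : Step Q (C.dot M) U) (h' : Step Q (C.dot M') U') :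
    Terminates Q U ↔ Terminates Q U' :=
  (h.terminates_iff hQ).symm.trans ((hMM' Q hQ hPQ C).trans (h'.terminates_iff hQ))

end Evaluation

namespace Rule

def plugDot (a : ℕ) (X : Tm) : Rule := ⟨a, 2, .dot X.toRhs (.dot (.var 0) (.var 1))⟩

def plugDotSwap (b : ℕ) (X : Tm) : Rule := ⟨b, 2, .dot X.toRhs (.dot (.var 1) (.var 0))⟩

lemma plugDot_vars (a : ℕ) (X : Tm) (v : ℕ) :
    (plugDot a X).rhs.HasVar v → v < (plugDot a X).arity := by
  rintro (hv | hv | hv)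
  · exact absurd hv (X.not_hasVar_toRhs v)
  all_goals (show v < 2; simp only [Rhs.HasVar] at hv; omega)

lemma plugDotSwap_vars (b : ℕ) (X : Tm) (v : ℕ) :
    (plugDotSwap b X).rhs.HasVar v → v < (plugDotSwap b X).arity := by
  rintro (hv | hv | hv)
  · exact absurd hv (X.not_hasVar_toRhs v)
  all_goals (show v < 2; simp only [Rhs.HasVar] at hv; omega)

end Rule

namespace Program

/-- The paper's extension by `A.m.n → X.(m.n)` and `B.n.m → X.(m.n)`, with `A = a` and `B = b`. -/
def withPlugDot (P : Program) (X : Tm) (a b : ℕ) : Program :=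
  insert (Rule.plugDot a X) (insert (Rule.plugDotSwap b X) P)

variable {P : Program} {X : Tm} {a b : ℕ}

lemma subset_withPlugDot : P ⊆ P.withPlugDot X a b :=
  (Finset.subset_insert _ _).trans (Finset.subset_insert _ _)

lemma Wf.withPlugDot (hP : P.Wf) (ha : ¬ P.Defines a) (hb : ¬ P.Defines b) (hab : a ≠ b) :
    (P.withPlugDot X a b).Wf := by
  refine (hP.insert (Rule.plugDotSwap_vars b X) hb).insert (Rule.plugDot_vars a X) ?_
  rintro ⟨r, hr, hhead⟩
  rcases Finset.mem_insert.1 hr with rfl | hr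
  exacts [hab hhead.symm, ha ⟨r, hr, hhead⟩]

lemma step_withPlugDot (m n : Tm) :
    Step (P.withPlugDot X a b) (((Tm.name a).dot m).dot n) (X.dot (m.dot n)) :=
  ⟨Rule.plugDot a X, by simp [withPlugDot], [m, n], rfl, rfl,
    by simp [Rule.plugDot, Rhs.inst, Tm.inst_toRhs]⟩

lemma step_withPlugDot_swap (m n : Tm) :
    Step (P.withPlugDot X a b) (((Tm.name b).dot n).dot m) (X.dot (m.dot n)) :=
  ⟨Rule.plugDotSwap b X, by simp [withPlugDot], [n, m], rfl, rfl,
    by simp [Rule.plugDotSwap, Rhs.inst, Tm.inst_toRhs]⟩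

lemma terminates_withPlugDot_iff {S : Set ℕ} {M : Tm} (hP : P.names ⊆ S) (ha : a ∉ S)
    (hb : b ∉ S) (hM : M.names ⊆ S) :
    Terminates (P.withPlugDot X a b) M ↔ Terminates P M := by
  refine terminates_iff_of_extension subset_withPlugDot hP (fun r hr hhead => ?_) hM
  simp only [withPlugDot, Finset.mem_insert] at hr
  rcases hr with rfl | rfl | hr
  exacts [absurd hhead ha, absurd hhead hb, hr]

end Program

theorem obsEq_congruence_general (P : Program) (M M' N N' : Tm)
    (h1 : ObsEq P M M') (h2 : ObsEq P N N') :
    ObsEq P (M.dot N) (M'.dot N') := by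
  intro P' hP' hPP' X
  set S := P'.names ∪ (X.dot ((M.dot N).dot (M'.dot N'))).names
  obtain ⟨B, hB⟩ := (P'.finite_names.union (Tm.finite_names _)).bddAbove
  have hfresh : ∀ n, B < n → n ∉ S := fun n hn hS => hn.not_ge (hB hS)
  set Q := P'.withPlugDot X (B + 1) (B + 2)
  have hQ : Q.Wf := hP'.withPlugDot (fun h => hfresh _ (by omega) (Or.inl h.mem_names))
    (fun h => hfresh _ (by omega) (Or.inl h.mem_names)) (by omega)
  have hPQ : P ⊆ Q := hPP'.trans Program.subset_withPlugDot
  have hext : ∀ W : Tm, W.names ⊆ S → (Terminates Q W ↔ Terminates P' W) := fun W hW =>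
    Program.terminates_withPlugDot_iff Set.subset_union_left (hfresh _ (by omega))
      (hfresh _ (by omega)) hW
  calc Terminates P' (X.dot (M.dot N))
      ↔ Terminates Q (X.dot (M.dot N)) := (hext _ (by intro n; simp [S]; tauto)).symm
    _ ↔ Terminates Q (X.dot (M'.dot N)) := h1.terminates_iff_of_step hQ hPQ
        (Program.step_withPlugDot_swap M N) (Program.step_withPlugDot_swap M' N)
    _ ↔ Terminates Q (X.dot (M'.dot N')) := h2.terminates_iff_of_step hQ hPQ
        (Program.step_withPlugDot M' N) (Program.step_withPlugDot M' N')
    _ ↔ Terminates P' (X.dot (M'.dot N')) := hext _ (by intro n; simp [S]; tauto)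

theorem obsEq_congruence (P : Program) (hP : P.Wf) (M M' N N' : Tm)
    (h1 : ObsEq P M M') (h2 : ObsEq P N N') :
    ObsEq P (M.dot N) (M'.dot N') :=
  obsEq_congruence_general P M M' N N' h1 h2
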